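/- In Splythoff Nim, the P-positions are exactly (0,0) together with the pairs (a_i, b_i), i ≥ 1, generated by the mex rule δ_{i+1} = mex(Δ_i ∪ Σ_i), a_{i+1} = mex(A_i ∪ B_i), b_{i+1} = a_{i+1} + δ_{i+1}, σ_{i+1} = a_{i+1} + b_{i+1} (mex over positive integers, indices from 1, so (a_1,b_1) = (1,2)). -/
import Mathlib


/-- The moves of Splythoff Nim, on (ordered representatives of unordered) pairs of
pile sizes: (single) remove a positive number of counters from one pile;
(double) remove an equal positive number from both piles; (split) remove an equal
positive number from both piles emptying one of them, and split the remaining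
(nonempty) pile into two nonempty piles. -/
def Move (p q : ℕ × ℕ) : Prop :=
  (q.1 < p.1 ∧ q.2 = p.2) ∨ (q.1 = p.1 ∧ q.2 < p.2) ∨
  (∃ t, 0 < t ∧ t ≤ p.1 ∧ t ≤ p.2 ∧ q.1 = p.1 - t ∧ q.2 = p.2 - t) ∨
  (0 < p.1 ∧ p.1 ≤ p.2 ∧ 0 < q.1 ∧ 0 < q.2 ∧ q.1 + q.2 = p.2 - p.1) ∨
  (0 < p.2 ∧ p.2 ≤ p.1 ∧ 0 < q.1 ∧ 0 < q.2 ∧ q.1 + q.2 = p.1 - p.2)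

/-- P-positions of Splythoff Nim: a position is a P-position (previous player wins,
i.e. the player to move loses) iff every move from it leads to a non-P-position. -/
def IsP (p : ℕ × ℕ) : Prop :=
  ∀ q, Move p q → ¬ IsP q
termination_by p.1 + p.2
decreasing_by
  rcases ‹Move p q› with h | h | ⟨t, ht⟩ | h | h <;> omega

/-- mex over the positive integers. -/
noncomputable def mexP (S : Set ℕ) : ℕ := sInf {n | 0 < n ∧ n ∉ S}

/-- One step of the mex rule generating (a_{i+1}, b_{i+1}, δ_{i+1}, σ_{i+1})
from the history: δ_{i+1} = mex(Δ_i ∪ Σ_i), a_{i+1} = mex(A_i ∪ B_i),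
b_{i+1} = a_{i+1} + δ_{i+1}, σ_{i+1} = a_{i+1} + b_{i+1}. -/
noncomputable def step (h : List (ℕ × ℕ × ℕ × ℕ)) : ℕ × ℕ × ℕ × ℕ :=
  let δ := mexP {m | ∃ t ∈ h, t.2.2.1 = m ∨ t.2.2.2 = m}
  let a := mexP {m | ∃ t ∈ h, t.1 = m ∨ t.2.1 = m}
  (a, a + δ, δ, a + (a + δ))

/-- The history of the first i tuples generated by the mex rule. -/
noncomputable def hist : ℕ → List (ℕ × ℕ × ℕ × ℕ)
  | 0 => []
  | i + 1 => hist i ++ [step (hist i)]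

noncomputable def aSeq (i : ℕ) : ℕ := (step (hist (i - 1))).1
noncomputable def bSeq (i : ℕ) : ℕ := (step (hist (i - 1))).2.1

noncomputable def dSeq (i : ℕ) : ℕ := (step (hist (i - 1))).2.2.1

def ABl (h : List (ℕ × ℕ × ℕ × ℕ)) : Set ℕ := {m | ∃ t ∈ h, t.1 = m ∨ t.2.1 = m}
def DSl (h : List (ℕ × ℕ × ℕ × ℕ)) : Set ℕ := {m | ∃ t ∈ h, t.2.2.1 = m ∨ t.2.2.2 = m}

lemma aSeq_succ (i : ℕ) : aSeq (i+1) = mexP (ABl (hist i)) := rfl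
lemma dSeq_succ (i : ℕ) : dSeq (i+1) = mexP (DSl (hist i)) := rfl
lemma bSeq_eq (i : ℕ) : bSeq i = aSeq i + dSeq i := rfl
lemma sSeq_eq (h : List (ℕ × ℕ × ℕ × ℕ)) : (step h).2.2.2 = (step h).1 + (step h).2.1 := rfl

lemma exists_bound (h : List (ℕ × ℕ × ℕ × ℕ)) :
    ∃ N, 0 < N ∧ ∀ t ∈ h, t.1 < N ∧ t.2.1 < N ∧ t.2.2.1 < N ∧ t.2.2.2 < N := by
  induction h with
  | nil => exact ⟨1, by simp⟩
  | cons x xs ih =>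
    obtain ⟨N, hN0, hN⟩ := ih
    refine ⟨N + x.1 + x.2.1 + x.2.2.1 + x.2.2.2 + 1, by omega, ?_⟩
    intro t ht
    rcases List.mem_cons.1 ht with rfl | ht
    · omega
    · have := hN t ht; omega

lemma AB_cand (h : List (ℕ × ℕ × ℕ × ℕ)) : {n | 0 < n ∧ n ∉ ABl h}.Nonempty := by
  obtain ⟨N, hN0, hN⟩ := exists_bound h
  refine ⟨N, hN0, ?_⟩
  rintro ⟨t, ht, h1 | h1⟩ <;> have := hN t ht <;> omega

lemma DS_cand (h : List (ℕ × ℕ × ℕ × ℕ)) : {n | 0 < n ∧ n ∉ DSl h}.Nonempty := by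
  obtain ⟨N, hN0, hN⟩ := exists_bound h
  refine ⟨N, hN0, ?_⟩
  rintro ⟨t, ht, h1 | h1⟩ <;> have := hN t ht <;> omega

lemma mexP_pos {S : Set ℕ} (h : {n | 0 < n ∧ n ∉ S}.Nonempty) : 0 < mexP S :=
  (Nat.sInf_mem h).1

lemma mexP_not_mem {S : Set ℕ} (h : {n | 0 < n ∧ n ∉ S}.Nonempty) : mexP S ∉ S :=
  (Nat.sInf_mem h).2

lemma mexP_le {S : Set ℕ} {n : ℕ} (h0 : 0 < n) (h1 : n ∉ S) : mexP S ≤ n :=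
  Nat.sInf_le ⟨h0, h1⟩

lemma mem_of_lt_mexP {S : Set ℕ} {n : ℕ} (h0 : 0 < n) (h1 : n < mexP S) : n ∈ S := by
  by_contra h
  exact absurd (mexP_le h0 h) (by omega)

lemma mem_hist {t : ℕ × ℕ × ℕ × ℕ} {i : ℕ} : t ∈ hist i ↔ ∃ k, k < i ∧ t = step (hist k) := by
  induction i with
  | zero => simp [hist]
  | succ i ih =>
    simp only [hist, List.mem_append, List.mem_singleton, ih]
    constructor
    · rintro (⟨k, hk, rfl⟩ | rfl)
      · exact ⟨k, by omega, rfl⟩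
      · exact ⟨i, by omega, rfl⟩
    · rintro ⟨k, hk, rfl⟩
      rcases Nat.lt_succ_iff_lt_or_eq.1 hk with hk | rfl
      · exact Or.inl ⟨k, hk, rfl⟩
      · exact Or.inr rfl

lemma mem_AB_iff {m i : ℕ} :
    m ∈ ABl (hist i) ↔ ∃ k, 1 ≤ k ∧ k ≤ i ∧ (aSeq k = m ∨ bSeq k = m) := by
  constructor
  · rintro ⟨t, ht, hm⟩
    obtain ⟨k, hk, rfl⟩ := mem_hist.1 ht
    exact ⟨k + 1, by omega, by omega, hm⟩
  · rintro ⟨k, hk1, hki, hm⟩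
    refine ⟨step (hist (k-1)), mem_hist.2 ⟨k-1, by omega, rfl⟩, ?_⟩
    have : k - 1 + 1 = k := by omega
    rw [← this] at hm
    exact hm

lemma mem_DS_iff {m i : ℕ} :
    m ∈ DSl (hist i) ↔ ∃ k, 1 ≤ k ∧ k ≤ i ∧ (dSeq k = m ∨ aSeq k + bSeq k = m) := by
  constructor
  · rintro ⟨t, ht, hm⟩
    obtain ⟨k, hk, rfl⟩ := mem_hist.1 ht
    rw [sSeq_eq] at hm
    exact ⟨k + 1, by omega, by omega, hm⟩
  · rintro ⟨k, hk1, hki, hm⟩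
    refine ⟨step (hist (k-1)), mem_hist.2 ⟨k-1, by omega, rfl⟩, ?_⟩
    rw [sSeq_eq]
    have : k - 1 + 1 = k := by omega
    rw [← this] at hm
    exact hm
lemma aSeq_pos (i : ℕ) : 0 < aSeq i := mexP_pos (AB_cand _)
lemma dSeq_pos (i : ℕ) : 0 < dSeq i := mexP_pos (DS_cand _)
lemma aSeq_lt_bSeq (i : ℕ) : aSeq i < bSeq i := by
  have := dSeq_pos i; rw [bSeq_eq]; omega

lemma aSeq_mem_AB {k i : ℕ} (h1 : 1 ≤ k) (h2 : k ≤ i) : aSeq k ∈ ABl (hist i) :=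
  mem_AB_iff.2 ⟨k, h1, h2, Or.inl rfl⟩
lemma bSeq_mem_AB {k i : ℕ} (h1 : 1 ≤ k) (h2 : k ≤ i) : bSeq k ∈ ABl (hist i) :=
  mem_AB_iff.2 ⟨k, h1, h2, Or.inr rfl⟩
lemma dSeq_mem_DS {k i : ℕ} (h1 : 1 ≤ k) (h2 : k ≤ i) : dSeq k ∈ DSl (hist i) :=
  mem_DS_iff.2 ⟨k, h1, h2, Or.inl rfl⟩
lemma sSeq_mem_DS {k i : ℕ} (h1 : 1 ≤ k) (h2 : k ≤ i) : aSeq k + bSeq k ∈ DSl (hist i) :=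
  mem_DS_iff.2 ⟨k, h1, h2, Or.inr rfl⟩

lemma aSeq_not_mem {i : ℕ} : aSeq (i+1) ∉ ABl (hist i) := mexP_not_mem (AB_cand _)
lemma dSeq_not_mem {i : ℕ} : dSeq (i+1) ∉ DSl (hist i) := mexP_not_mem (DS_cand _)

lemma AB_mono {i j : ℕ} (h : i ≤ j) : ABl (hist i) ⊆ ABl (hist j) := by
  intro m hm
  obtain ⟨k, h1, h2, h3⟩ := mem_AB_iff.1 hm
  exact mem_AB_iff.2 ⟨k, h1, by omega, h3⟩
lemma DS_mono {i j : ℕ} (h : i ≤ j) : DSl (hist i) ⊆ DSl (hist j) := by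
  intro m hm
  obtain ⟨k, h1, h2, h3⟩ := mem_DS_iff.1 hm
  exact mem_DS_iff.2 ⟨k, h1, by omega, h3⟩

lemma aSeq_succ_lt {i : ℕ} (hi : 1 ≤ i) : aSeq i < aSeq (i+1) := by
  have h1 : aSeq i ≤ aSeq (i+1) := by
    have hi' : i = (i-1)+1 := by omega
    rw [hi', aSeq_succ]
    exact mexP_le (aSeq_pos _) (fun h => aSeq_not_mem (AB_mono (by omega) h))
  have h2 : aSeq i ≠ aSeq (i+1) := by
    intro h
    exact aSeq_not_mem (h ▸ aSeq_mem_AB hi le_rfl)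
  omega

lemma dSeq_succ_lt {i : ℕ} (hi : 1 ≤ i) : dSeq i < dSeq (i+1) := by
  have h1 : dSeq i ≤ dSeq (i+1) := by
    have hi' : i = (i-1)+1 := by omega
    rw [hi', dSeq_succ]
    exact mexP_le (dSeq_pos _) (fun h => dSeq_not_mem (DS_mono (by omega) h))
  have h2 : dSeq i ≠ dSeq (i+1) := by
    intro h
    exact dSeq_not_mem (h ▸ dSeq_mem_DS hi le_rfl)
  omega

lemma aSeq_lt_of_lt {i j : ℕ} (hi : 1 ≤ i) (hij : i < j) : aSeq i < aSeq j := by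
  induction j with
  | zero => omega
  | succ j ih =>
    rcases Nat.lt_succ_iff_lt_or_eq.1 hij with h | rfl
    · exact lt_trans (ih h) (aSeq_succ_lt (by omega))
    · exact aSeq_succ_lt hi

lemma dSeq_lt_of_lt {i j : ℕ} (hi : 1 ≤ i) (hij : i < j) : dSeq i < dSeq j := by
  induction j with
  | zero => omega
  | succ j ih =>
    rcases Nat.lt_succ_iff_lt_or_eq.1 hij with h | rfl
    · exact lt_trans (ih h) (dSeq_succ_lt (by omega))
    · exact dSeq_succ_lt hi

lemma bSeq_lt_of_lt {i j : ℕ} (hi : 1 ≤ i) (hij : i < j) : bSeq i < bSeq j := by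
  have := aSeq_lt_of_lt hi hij
  have := dSeq_lt_of_lt hi hij
  rw [bSeq_eq, bSeq_eq]; omega

lemma le_aSeq {i : ℕ} (hi : 1 ≤ i) : i ≤ aSeq i := by
  induction i with
  | zero => omega
  | succ i ih =>
    rcases Nat.eq_zero_or_pos i with rfl | hp
    · exact aSeq_pos 1
    · have := aSeq_succ_lt hp; have := ih hp; omega

lemma le_dSeq {i : ℕ} (hi : 1 ≤ i) : i ≤ dSeq i := by
  induction i with
  | zero => omega
  | succ i ih =>
    rcases Nat.eq_zero_or_pos i with rfl | hp
    · exact dSeq_pos 1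
    · have := dSeq_succ_lt hp; have := ih hp; omega

lemma complete_AB {n : ℕ} (hn : 1 ≤ n) : ∃ k, 1 ≤ k ∧ (aSeq k = n ∨ bSeq k = n) := by
  have h1 : n < aSeq (n+1) := lt_of_lt_of_le (by omega) (le_aSeq (by omega))
  rw [aSeq_succ] at h1
  obtain ⟨k, hk1, _, hk3⟩ := mem_AB_iff.1 (mem_of_lt_mexP hn h1)
  exact ⟨k, hk1, hk3⟩

lemma complete_DS {n : ℕ} (hn : 1 ≤ n) : ∃ k, 1 ≤ k ∧ (dSeq k = n ∨ aSeq k + bSeq k = n) := by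
  have h1 : n < dSeq (n+1) := lt_of_lt_of_le (by omega) (le_dSeq (by omega))
  rw [dSeq_succ] at h1
  obtain ⟨k, hk1, _, hk3⟩ := mem_DS_iff.1 (mem_of_lt_mexP hn h1)
  exact ⟨k, hk1, hk3⟩

lemma aSeq_ne_bSeq {j k : ℕ} (hj : 1 ≤ j) (hk : 1 ≤ k) : aSeq j ≠ bSeq k := by
  intro h
  rcases le_or_gt j k with hjk | hjk
  · have h1 : aSeq j ≤ aSeq k := by
      rcases Nat.lt_or_ge j k with h2 | h2
      · exact le_of_lt (aSeq_lt_of_lt hj h2)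
      · have : j = k := by omega
        exact this ▸ le_rfl
    have := aSeq_lt_bSeq k; omega
  · have hj' : j = (j-1)+1 := by omega
    have : bSeq k ∈ ABl (hist (j-1)) := bSeq_mem_AB hk (by omega)
    rw [← h, hj'] at this
    exact aSeq_not_mem this

lemma dSeq_ne_sSeq {j k : ℕ} (hj : 1 ≤ j) (hk : 1 ≤ k) : dSeq j ≠ aSeq k + bSeq k := by
  intro h
  rcases le_or_gt j k with hjk | hjk
  · have h1 : dSeq j ≤ dSeq k := by
      rcases Nat.lt_or_ge j k with h2 | h2
      · exact le_of_lt (dSeq_lt_of_lt hj h2)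
      · have : j = k := by omega
        exact this ▸ le_rfl
    have := aSeq_pos k
    have := aSeq_lt_bSeq k
    have := bSeq_eq k
    omega
  · have hj' : j = (j-1)+1 := by omega
    have : aSeq k + bSeq k ∈ DSl (hist (j-1)) := sSeq_mem_DS hk (by omega)
    rw [← h, hj'] at this
    exact dSeq_not_mem this
def Good (a b : ℕ) : Prop :=
  (a = 0 ∧ b = 0) ∨
  (∃ i, 1 ≤ i ∧ ((a = aSeq i ∧ b = bSeq i) ∨ (a = bSeq i ∧ b = aSeq i)))

lemma good_swap {a b : ℕ} (h : Good a b) : Good b a := by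
  rcases h with ⟨h1, h2⟩ | ⟨i, hi, ⟨h1, h2⟩ | ⟨h1, h2⟩⟩
  · exact Or.inl ⟨h2, h1⟩
  · exact Or.inr ⟨i, hi, Or.inr ⟨h2, h1⟩⟩
  · exact Or.inr ⟨i, hi, Or.inl ⟨h2, h1⟩⟩

lemma move_swap {a b c d : ℕ} (h : Move (a, b) (c, d)) : Move (b, a) (d, c) := by
  rcases h with ⟨h1, h2⟩ | ⟨h1, h2⟩ | ⟨t, t0, t1, t2, t3, t4⟩ | ⟨h1, h2, h3, h4, h5⟩ | ⟨h1, h2, h3, h4, h5⟩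
  · exact Or.inr (Or.inl ⟨h2, h1⟩)
  · exact Or.inl ⟨h2, h1⟩
  · exact Or.inr (Or.inr (Or.inl ⟨t, t0, t2, t1, t4, t3⟩))
  · exact Or.inr (Or.inr (Or.inr (Or.inr ⟨h1, h2, h4, h3, by omega⟩)))
  · exact Or.inr (Or.inr (Or.inr (Or.inl ⟨h1, h2, h4, h3, by omega⟩)))

lemma move_mk {a b c d : ℕ} : Move (a, b) (c, d) ↔
    (c < a ∧ d = b) ∨ (c = a ∧ d < b) ∨
    (∃ t, 0 < t ∧ t ≤ a ∧ t ≤ b ∧ c = a - t ∧ d = b - t) ∨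
    (0 < a ∧ a ≤ b ∧ 0 < c ∧ 0 < d ∧ c + d = b - a) ∨
    (0 < b ∧ b ≤ a ∧ 0 < c ∧ 0 < d ∧ c + d = a - b) := Iff.rfl

lemma move_sum_lt {p q : ℕ × ℕ} (h : Move p q) : q.1 + q.2 < p.1 + p.2 := by
  rcases h with h | h | ⟨t, ht⟩ | h | h <;> omega

theorem isP_iff (p : ℕ × ℕ) : IsP p ↔ ∀ q, Move p q → ¬ IsP q := by
  rw [IsP]

lemma no_move_good {a b : ℕ} {q : ℕ × ℕ} (hG : Good a b) (hmv : Move (a, b) q)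
    (hGq : Good q.1 q.2) : False := by
  have key : ∀ a b c d : ℕ, a ≤ b → Good a b → Move (a, b) (c, d) → Good c d → False := by
    intro a b c d hab hG hmv hGq
    rw [move_mk] at hmv
    rcases hG with ⟨rfl, rfl⟩ | ⟨i, hi, hi2⟩
    · rcases hmv with h | h | ⟨t, ht⟩ | h | h <;> omega
    · have hi2' : a = aSeq i ∧ b = bSeq i := by
        rcases hi2 with h | ⟨h1, h2⟩
        · exact h
        · have := aSeq_lt_bSeq i; omega
      obtain ⟨rfl, rfl⟩ := hi2'
      have hab_i := aSeq_lt_bSeq i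
      have hbi := bSeq_eq i
      have hai_pos := aSeq_pos i
      rcases hGq with ⟨h1, h2⟩ | ⟨j, hj, hj2⟩
      · rcases hmv with h | h | ⟨t, ht⟩ | h | h <;> omega
      · have haj_pos := aSeq_pos j
        have hbj := bSeq_eq j
        have hab_j := aSeq_lt_bSeq j
        rcases hj2 with ⟨hq1, hq2⟩ | ⟨hq1, hq2⟩
        · -- (c, d) = (aSeq j, bSeq j)
          subst hq1 hq2
          rcases hmv with ⟨h1, h2⟩ | ⟨h1, h2⟩ | ⟨t, t0, t1, t2, t3, t4⟩ | h | h
          · have hij : j = i := by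
              by_contra hne
              rcases Nat.lt_or_ge j i with hlt | hge
              · have := bSeq_lt_of_lt hj hlt; omega
              · have := bSeq_lt_of_lt hi (show i < j by omega); omega
            subst hij; omega
          · have hij : j = i := by
              by_contra hne
              rcases Nat.lt_or_ge j i with hlt | hge
              · have := aSeq_lt_of_lt hj hlt; omega
              · have := aSeq_lt_of_lt hi (show i < j by omega); omega
            subst hij; omega
          · have hd : dSeq j = dSeq i := by omega
            have hij : j = i := by
              by_contra hne
              rcases Nat.lt_or_ge j i with hlt | hge
              · have := dSeq_lt_of_lt hj hlt; omega
              · have := dSeq_lt_of_lt hi (show i < j by omega); omega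
            subst hij; omega
          · exact dSeq_ne_sSeq hi hj (by omega)
          · omega
        · -- (c, d) = (bSeq j, aSeq j)
          subst hq1 hq2
          rcases hmv with ⟨h1, h2⟩ | ⟨h1, h2⟩ | ⟨t, t0, t1, t2, t3, t4⟩ | h | h
          · exact absurd (show aSeq j = bSeq i by omega) (aSeq_ne_bSeq hj hi)
          · exact absurd (show aSeq i = bSeq j by omega) (aSeq_ne_bSeq hi hj)
          · omega
          · exact dSeq_ne_sSeq hi hj (by omega)
          · omega
  obtain ⟨c, d⟩ := q
  rcases le_total a b with hab | hab
  · exact key a b c d hab hG hmv hGq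
  · exact key b a d c hab (good_swap hG) (move_swap hmv) (good_swap hGq)

lemma exists_move_ordered (a b : ℕ) (hab : a ≤ b) (h : ¬ Good a b) :
    ∃ c d, Move (a, b) (c, d) ∧ Good c d := by
  rcases Nat.eq_zero_or_pos a with rfl | ha
  · -- a = 0, b ≠ 0
    have hb : 0 < b := by
      rcases Nat.eq_zero_or_pos b with rfl | hb
      · exact absurd (Or.inl ⟨rfl, rfl⟩) h
      · exact hb
    exact ⟨0, 0, move_mk.2 (Or.inr (Or.inl ⟨rfl, hb⟩)), Or.inl ⟨rfl, rfl⟩⟩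
  · rcases eq_or_lt_of_le hab with rfl | hlt
    · exact ⟨0, 0, move_mk.2 (Or.inr (Or.inr (Or.inl ⟨a, ha, le_rfl, le_rfl, by omega, by omega⟩))),
        Or.inl ⟨rfl, rfl⟩⟩
    · obtain ⟨k, hk, hk2⟩ := complete_AB ha
      have hbk := bSeq_eq k
      have hdk := dSeq_pos k
      have hak := aSeq_pos k
      rcases hk2 with hk2 | hk2
      · -- a = aSeq k
        rcases Nat.lt_trichotomy b (bSeq k) with hb | hb | hb
        · -- b < bSeq k, consider δ = b - a
          obtain ⟨m, hm, hm2⟩ := complete_DS (n := b - a) (by omega)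
          have hbm := bSeq_eq m
          have hdm := dSeq_pos m
          have ham := aSeq_pos m
          rcases hm2 with hm2 | hm2
          · -- double move to (aSeq m, bSeq m)
            have hmk : m < k := by
              by_contra hge
              rcases Nat.lt_or_ge k m with hx | hx
              · have := dSeq_lt_of_lt hk hx; omega
              · have : m = k := by omega
                subst this; omega
            have hamk : aSeq m < a := by
              have := aSeq_lt_of_lt hm hmk; omega
            refine ⟨aSeq m, bSeq m, move_mk.2 (Or.inr (Or.inr (Or.inl
              ⟨a - aSeq m, by omega, by omega, by omega, by omega, by omega⟩))), ?_⟩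
            exact Or.inr ⟨m, hm, Or.inl ⟨rfl, rfl⟩⟩
          · -- split move to (aSeq m, bSeq m)
            refine ⟨aSeq m, bSeq m, move_mk.2 (Or.inr (Or.inr (Or.inr (Or.inl
              ⟨ha, hab, ham, by omega, by omega⟩)))), ?_⟩
            exact Or.inr ⟨m, hm, Or.inl ⟨rfl, rfl⟩⟩
        · exact absurd (Or.inr ⟨k, hk, Or.inl ⟨hk2.symm, hb⟩⟩) h
        · -- b > bSeq k : reduce second pile
          exact ⟨a, bSeq k, move_mk.2 (Or.inr (Or.inl ⟨rfl, hb⟩)),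
            Or.inr ⟨k, hk, Or.inl ⟨hk2.symm, rfl⟩⟩⟩
      · -- a = bSeq k : reduce second pile to aSeq k
        exact ⟨a, aSeq k, move_mk.2 (Or.inr (Or.inl ⟨rfl, by omega⟩)),
          Or.inr ⟨k, hk, Or.inr ⟨hk2.symm, rfl⟩⟩⟩

lemma exists_move (a b : ℕ) (h : ¬ Good a b) : ∃ c d, Move (a, b) (c, d) ∧ Good c d := by
  rcases le_total a b with hab | hab
  · exact exists_move_ordered a b hab h
  · obtain ⟨c, d, hmv, hG⟩ := exists_move_ordered b a hab (fun hx => h (good_swap hx))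
    exact ⟨d, c, move_swap hmv, good_swap hG⟩

lemma main_lemma : ∀ n a b, a + b = n → (IsP (a, b) ↔ Good a b) := by
  intro n
  induction n using Nat.strong_induction_on with
  | _ n ih =>
    intro a b hn
    have IH : ∀ c d : ℕ, c + d < n → (IsP (c, d) ↔ Good c d) := fun c d h => ih _ h c d rfl
    constructor
    · intro hP
      by_contra hG
      obtain ⟨c, d, hmv, hGq⟩ := exists_move a b hG
      have hlt : c + d < n := by have := move_sum_lt hmv; simp at this; omega
      exact (isP_iff _).1 hP (c, d) hmv ((IH c d hlt).2 hGq)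
    · intro hG
      rw [isP_iff]
      intro q hmv hPq
      obtain ⟨c, d⟩ := q
      have hlt : c + d < n := by have := move_sum_lt hmv; simp at this; omega
      exact no_move_good hG hmv ((IH c d hlt).1 hPq)


/-- The P-positions of Splythoff Nim are exactly (0,0) together with the
(unordered) pairs (a_i, b_i), i ≥ 1, generated by the mex rule. -/
theorem splythoff_P_positions (a b : ℕ) :
    IsP (a, b) ↔
      (a = 0 ∧ b = 0) ∨
      (∃ i, 1 ≤ i ∧ ((a = aSeq i ∧ b = bSeq i) ∨ (a = bSeq i ∧ b = aSeq i))) :=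
  main_lemma (a + b) a b rfl
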